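/- arXiv:1205.0175 — 5 statements merged into one kernel-verified Lean document; each statement's English description precedes it below -/
import Mathlib

section
/- Let T be a finite index set with |T| ≤ k, and for each i ∈ T let c_i > 0, a_i > 0, and set d_i = c_i/a_i and d_m = min_{i∈T} d_i. Suppose x^{old} : T → ℝ≥0 satisfies ∑_{i∈T} a_i x_i^{old} ≤ 1, and define x_i^{new} = (1 + d_m/d_i)·x_i^{old} + (1/(k·a_i))·(d_m/d_i). Then the increase in cost satisfies ∑_{i∈T} c_i·(x_i^{new} − x_i^{old}) ≤ 2·d_m. -/
theorem stmt_1 {ι : Type*} (T : Finset ι) (hT : T.Nonempty) (k : ℕ)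
    (hk : T.card ≤ k) (c a : ι → ℝ)
    (hc : ∀ i ∈ T, 0 < c i) (ha : ∀ i ∈ T, 0 < a i)
    (d : ι → ℝ) (hd : ∀ i ∈ T, d i = c i / a i)
    (dm : ℝ) (hdm : dm = T.inf' hT d)
    (xold xnew : ι → ℝ) (hxold : ∀ i ∈ T, 0 ≤ xold i)
    (hfeas : ∑ i ∈ T, a i * xold i ≤ 1)
    (hxnew : ∀ i ∈ T, xnew i = (1 + dm / d i) * xold i + (1 / (k * a i)) * (dm / d i)) :
    ∑ i ∈ T, c i * (xnew i - xold i) ≤ 2 * dm := by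
  have hkpos : (0:ℝ) < k := by
    have : 0 < T.card := Finset.card_pos.mpr hT
    exact_mod_cast lt_of_lt_of_le this hk
  have hdm_nonneg : 0 ≤ dm := by
    obtain ⟨j, hj, hje⟩ := T.exists_mem_eq_inf' hT d
    rw [hdm, hje, hd j hj]
    exact le_of_lt (div_pos (hc j hj) (ha j hj))
  have key : ∀ i ∈ T, c i * (xnew i - xold i) = dm * (a i * xold i) + dm / k := by
    intro i hi
    have hci := hc i hi
    have hai := ha i hi
    rw [hxnew i hi, hd i hi]
    field_simp
    ring
  rw [Finset.sum_congr rfl key, Finset.sum_add_distrib, ← Finset.mul_sum,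
    Finset.sum_const, nsmul_eq_mul]
  have h1 : dm * (∑ i ∈ T, a i * xold i) ≤ dm := by
    calc dm * (∑ i ∈ T, a i * xold i) ≤ dm * 1 := by
          exact mul_le_mul_of_nonneg_left hfeas hdm_nonneg
      _ = dm := mul_one dm
  have h2 : (T.card : ℝ) * (dm / k) ≤ dm := by
    calc (T.card : ℝ) * (dm / k) ≤ (k : ℝ) * (dm / k) := by
          apply mul_le_mul_of_nonneg_right (by exact_mod_cast hk)
          exact div_nonneg hdm_nonneg hkpos.le
      _ = dm := by field_simp
  linarith
end

section
/- Let T be a finite index set, δ ∈ (0,1], and for i ∈ T let c_i > 0, α_i > 0, d_i = c_i/α_i, and d_m = min_{i∈T} d_i. If |T| ≤ k and ∑_{i∈T} α_i x_i^{old} < 1, then the damped update x_i^{new} = (1 + δ·d_m/d_i)·x_i^{old} + (δ/(k·α_i))·(d_m/d_i) increases the cost by at most 2δ·d_m, i.e. ∑_{i∈T} c_i(x_i^{new} − x_i^{old}) ≤ 2δ·d_m. -/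
theorem stmt_2 {ι : Type*} (T : Finset ι) (hT : T.Nonempty) (k : ℕ)
    (hk : T.card ≤ k) (δ : ℝ) (hδ : δ ∈ Set.Ioc (0 : ℝ) 1)
    (c α : ι → ℝ)
    (hc : ∀ i ∈ T, 0 < c i) (hα : ∀ i ∈ T, 0 < α i)
    (d : ι → ℝ) (hd : ∀ i ∈ T, d i = c i / α i)
    (dm : ℝ) (hdm : dm = T.inf' hT d)
    (xold xnew : ι → ℝ) (hxold : ∀ i ∈ T, 0 ≤ xold i)
    (hfeas : ∑ i ∈ T, α i * xold i < 1)
    (hxnew : ∀ i ∈ T,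
      xnew i = (1 + δ * (dm / d i)) * xold i + (δ / (k * α i)) * (dm / d i)) :
    ∑ i ∈ T, c i * (xnew i - xold i) ≤ 2 * δ * dm := by
  obtain ⟨hδ0, hδ1⟩ := hδ
  have hk0 : (0:ℝ) < k := by
    have := hT.card_pos
    exact_mod_cast lt_of_lt_of_le this hk
  have hdm_pos : 0 < dm := by
    rw [hdm, Finset.lt_inf'_iff]
    intro i hi
    rw [hd i hi]
    exact div_pos (hc i hi) (hα i hi)
  have key : ∀ i ∈ T, c i * (xnew i - xold i) = δ * dm * (α i * xold i) + δ * dm / k := by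
    intro i hi
    rw [hxnew i hi, hd i hi]
    have hci := (hc i hi).ne'
    have hαi := (hα i hi).ne'
    field_simp
    ring
  rw [Finset.sum_congr rfl key, Finset.sum_add_distrib, ← Finset.mul_sum,
    Finset.sum_const, nsmul_eq_mul]
  have h1 : δ * dm * ∑ i ∈ T, α i * xold i ≤ δ * dm := by
    nlinarith [mul_pos hδ0 hdm_pos, hfeas]
  have h2 : (T.card : ℝ) * (δ * dm / k) ≤ δ * dm := by
    have hck : (T.card : ℝ) ≤ k := by exact_mod_cast hk
    rw [div_eq_mul_inv]
    have : (T.card : ℝ) * (δ * dm * (↑k)⁻¹) ≤ (k : ℝ) * (δ * dm * (↑k)⁻¹) := by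
      apply mul_le_mul_of_nonneg_right hck
      positivity
    calc (T.card : ℝ) * (δ * dm * (↑k)⁻¹) ≤ (k : ℝ) * (δ * dm * (↑k)⁻¹) := this
      _ = δ * dm := by field_simp
  linarith
end

section
/- Let W'_1, …, W'_n be independent random variables with W'_i ∼ Binomial(u_i, 2w_i/u_i) where 0 ≤ w_i ≤ u_i/2 and u_i is a positive integer. Let ā_i ∈ [0,1] with ∑_i ā_i w_i ≥ 1. Then E[∑ c_i W'_i] = 2·∑ c_i w_i, E[∑ ā_i W'_i] ≥ 2, and Pr[∑_i ā_i W'_i < 1] ≤ 8/9. -/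
/-!
Each `W i` has law `Bin(u i, 2 w i / u i)`, so its mean is `2 w i` and its variance is at most its
mean. By linearity the expectations are as claimed, and by independence the variance of
`S = ∑ abar i * W i` is `∑ abar i ^ 2 Var[W i] ≤ E[S] = m`, where `m ≥ 2`. Cantelli's one-sided
Chebyshev inequality then gives `P(S < 1) ≤ P(S ≤ m - (m - 1)) ≤ m / (m + (m - 1) ^ 2) ≤ 2 / 3`.
-/

open MeasureTheory ProbabilityTheory Finset
open scoped unitInterval

lemma sum_range_choose_mul_pow_mul_natCast (n : ℕ) (p : ℝ) :
    ∑ k ∈ range (n + 1), (n.choose k * p ^ k * (1 - p) ^ (n - k)) * (k : ℝ) = n * p := by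
  simpa [bernsteinPolynomial, Polynomial.eval_finsetSum, mul_comm, mul_assoc, mul_left_comm]
    using congrArg (Polynomial.eval p) (bernsteinPolynomial.sum_smul ℝ n)

lemma sum_range_choose_mul_pow_mul_natCast_sq (n : ℕ) (p : ℝ) :
    ∑ k ∈ range (n + 1), (n.choose k * p ^ k * (1 - p) ^ (n - k)) * (k : ℝ) ^ 2 =
      n * p * (1 - p) + (n * p) ^ 2 := by
  have hfact : ∑ k ∈ range (n + 1), (n.choose k * p ^ k * (1 - p) ^ (n - k)) *
      ((k * (k - 1) : ℕ) : ℝ) = (n * (n - 1) : ℕ) * p ^ 2 := by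
    simpa [bernsteinPolynomial, Polynomial.eval_finsetSum, mul_comm, mul_assoc, mul_left_comm]
      using congrArg (Polynomial.eval p) (bernsteinPolynomial.sum_mul_smul ℝ n)
  have hsq : ∀ k : ℕ, (k : ℝ) ^ 2 = ((k * (k - 1) : ℕ) : ℝ) + k := by
    rintro (_ | k) <;> push_cast [Nat.add_sub_cancel] <;> ring
  simp_rw [hsq, mul_add, sum_add_distrib, hfact, sum_range_choose_mul_pow_mul_natCast]
  rcases n with _ | n
  · simp
  · push_cast [Nat.add_sub_cancel]; ring

namespace ProbabilityTheory

variable {Ω : Type*} {mΩ : MeasurableSpace Ω} {μ : Measure Ω}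

section Binomial

variable {n : ℕ} {p : I}

lemma hasLaw_binomial_of_measure_eq {X : Ω → ℕ} (hX : Measurable X) (hle : ∀ ω, X ω ≤ n)
    (hX_eq : ∀ k ≤ n, μ {ω | X ω = k} =
      ENNReal.ofReal (n.choose k * (p : ℝ) ^ k * (1 - (p : ℝ)) ^ (n - k))) :
    HasLaw X Bin(n, p) μ where
  aemeasurable := hX.aemeasurable
  map_eq := by
    refine Measure.ext_of_singleton fun k => ?_
    rw [Measure.map_apply hX (measurableSet_singleton k), binomial_singleton]
    rcases le_or_gt k n with hk | hk
    · exact hX_eq k hk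
    · have hempty : X ⁻¹' {k} = ∅ := Set.eq_empty_of_forall_notMem fun ω hω =>
        (hle ω).not_gt (hω.symm ▸ hk)
      simp [hempty, Nat.choose_eq_zero_of_lt hk]

lemma HasLaw.natCast_binomial {X : Ω → ℕ} (hX : HasLaw X Bin(n, p) μ) :
    HasLaw (fun ω => (X ω : ℝ)) Bin(ℝ, n, p) μ :=
  HasLaw.comp ⟨measurable_from_top.aemeasurable, rfl⟩ hX

lemma integral_of_hasLaw_binomial {X : Ω → ℝ} (hX : HasLaw X Bin(ℝ, n, p) μ) :
    μ[X] = (p : ℝ) * n := by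
  rw [hX.integral_eq, integral_map_cast_binomial (fun x : ℝ => x), ← Nat.range_succ_eq_Iic]
  simp only [smul_eq_mul]
  rw [sum_range_choose_mul_pow_mul_natCast, mul_comm]

lemma variance_of_hasLaw_binomial {X : Ω → ℝ} (hX : HasLaw X Bin(ℝ, n, p) μ) :
    Var[X; μ] = p * (1 - p) * n := by
  have hL2 : MemLp id 2 Bin(ℝ, n, p) :=
    (memLp_two_iff_integrable_sq aestronglyMeasurable_id).2 (integrable_map_cast_binomial _)
  rw [hX.variance_eq, variance_eq_sub hL2]
  simp only [Pi.pow_apply, id]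
  rw [integral_map_cast_binomial (fun x : ℝ => x ^ 2), integral_map_cast_binomial (fun x : ℝ => x),
    ← Nat.range_succ_eq_Iic]
  simp only [smul_eq_mul]
  rw [sum_range_choose_mul_pow_mul_natCast, sum_range_choose_mul_pow_mul_natCast_sq]
  ring

lemma variance_le_integral_of_hasLaw_binomial {X : Ω → ℝ} (hX : HasLaw X Bin(ℝ, n, p) μ) :
    Var[X; μ] ≤ μ[X] := by
  rw [variance_of_hasLaw_binomial hX, integral_of_hasLaw_binomial hX]
  exact mul_le_mul_of_nonneg_right (by nlinarith [p.2.1, p.2.2]) n.cast_nonneg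

end Binomial

theorem variance_sum_mul_le_integral [IsProbabilityMeasure μ] {ι : Type*} [Fintype ι]
    {X : ι → Ω → ℝ} (hX : ∀ i, MemLp (X i) 2 μ) (hindep : Pairwise fun i j => X i ⟂ᵢ[μ] X j)
    (hvar : ∀ i, Var[X i; μ] ≤ μ[X i]) {a : ι → ℝ} (ha : ∀ i, a i ∈ Set.Icc (0 : ℝ) 1) :
    Var[fun ω => ∑ i, a i * X i ω; μ] ≤ μ[fun ω => ∑ i, a i * X i ω] := by
  have hsum : (fun ω => ∑ i, a i * X i ω) = ∑ i, fun ω => a i * X i ω := by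
    ext ω; simp
  rw [integral_finsetSum _ fun i _ => ((hX i).integrable one_le_two).const_mul (a i), hsum,
    IndepFun.variance_sum (fun i _ => (hX i).const_mul (a i)) fun i _ j _ hij =>
      (hindep hij).comp (measurable_const_mul (a i)) (measurable_const_mul (a j))]
  refine sum_le_sum fun i _ => ?_
  rw [variance_const_mul, integral_const_mul]
  obtain ⟨ha0, ha1⟩ := ha i
  have hV := variance_nonneg (X i) μ
  calc a i ^ 2 * Var[X i; μ] ≤ a i * Var[X i; μ] :=
        mul_le_mul_of_nonneg_right (by nlinarith) hV
    _ ≤ a i * μ[X i] := mul_le_mul_of_nonneg_left (hvar i) ha0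

lemma integral_sub_sq_eq_variance_add [IsProbabilityMeasure μ] {Z : Ω → ℝ} (hZ : MemLp Z 2 μ)
    (c : ℝ) : ∫ ω, (Z ω - c) ^ 2 ∂μ = Var[Z; μ] + (μ[Z] - c) ^ 2 := by
  have hZc : MemLp (fun ω => Z ω - c) 2 μ := hZ.sub (memLp_const c)
  rw [← variance_sub_const hZ.aestronglyMeasurable c, variance_eq_sub hZc,
    integral_sub (hZ.integrable one_le_two) (integrable_const c), integral_const, probReal_univ,
    one_smul]
  simp only [Pi.pow_apply]
  ring

-- Cantelli's inequality, from Markov's inequality for `(Z - (μ[Z] + t))²` with the optimal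
-- shift `t = Var[Z] / s`.
theorem measureReal_le_integral_sub_le [IsProbabilityMeasure μ] {Z : Ω → ℝ} (hZ : MemLp Z 2 μ)
    {s : ℝ} (hs : 0 < s) :
    μ.real {ω | Z ω ≤ μ[Z] - s} ≤ Var[Z; μ] / (Var[Z; μ] + s ^ 2) := by
  set V := Var[Z; μ]
  set m := μ[Z]
  have hV : 0 ≤ V := variance_nonneg Z μ
  set t := V / s
  have ht : 0 ≤ t := div_nonneg hV hs.le
  have hsub : {ω | Z ω ≤ m - s} ⊆ {ω | (s + t) ^ 2 ≤ (Z ω - (m + t)) ^ 2} := fun ω hω => by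
    simp only [Set.mem_ofPred_eq] at hω ⊢
    nlinarith
  have hmarkov := mul_meas_ge_le_integral_of_nonneg (f := fun ω => (Z ω - (m + t)) ^ 2)
    (ae_of_all _ fun ω => sq_nonneg _) (hZ.sub (memLp_const (m + t))).integrable_sq ((s + t) ^ 2)
  rw [integral_sub_sq_eq_variance_add hZ] at hmarkov
  calc μ.real {ω | Z ω ≤ m - s}
      ≤ μ.real {ω | (s + t) ^ 2 ≤ (Z ω - (m + t)) ^ 2} := measureReal_mono hsub
    _ ≤ (V + t ^ 2) / (s + t) ^ 2 := by
      rw [le_div_iff₀ (by positivity)]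
      nlinarith
    _ = V / (V + s ^ 2) := by
      simp only [t]
      field_simp
      ring

theorem measureReal_lt_one_le_of_variance_le_integral [IsProbabilityMeasure μ] {Z : Ω → ℝ}
    (hZ : MemLp Z 2 μ) (hvar : Var[Z; μ] ≤ μ[Z]) (hmean : 2 ≤ μ[Z]) :
    μ.real {ω | Z ω < 1} ≤ 2 / 3 := by
  set V := Var[Z; μ]
  set m := μ[Z]
  have hV : 0 ≤ V := variance_nonneg Z μ
  have hsub : {ω | Z ω < 1} ⊆ {ω | Z ω ≤ m - (m - 1)} := fun ω hω => by
    simp only [Set.mem_ofPred_eq, sub_sub_cancel] at hω ⊢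
    exact hω.le
  calc μ.real {ω | Z ω < 1}
      ≤ V / (V + (m - 1) ^ 2) :=
        (measureReal_mono hsub).trans (measureReal_le_integral_sub_le hZ (by linarith))
    _ ≤ m / (m + (m - 1) ^ 2) := by
      rw [div_le_div_iff₀ (by nlinarith) (by nlinarith)]
      nlinarith [sq_nonneg (m - 1)]
    _ ≤ 2 / 3 := by
      rw [div_le_div_iff₀ (by positivity) (by norm_num)]
      nlinarith

end ProbabilityTheory

theorem stmt_8_general {Ω : Type*} [MeasureSpace Ω] (μ : Measure Ω) [IsProbabilityMeasure μ]
    (n : ℕ) (W : Fin n → Ω → ℕ) (hmeas : ∀ i, Measurable (W i))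
    (hindep : iIndepFun W μ)
    (u : Fin n → ℕ) (hu : ∀ i, 0 < u i)
    (w c : Fin n → ℝ) (hw0 : ∀ i, 0 ≤ w i) (hw : ∀ i, w i ≤ (u i : ℝ) / 2)
    (abar : Fin n → ℝ) (habar : ∀ i, abar i ∈ Set.Icc (0 : ℝ) 1)
    (hfrac : ∑ i, abar i * w i ≥ 1)
    (hle : ∀ i, ∀ ω, W i ω ≤ u i)
    -- W i is distributed as Binomial(u i, 2 w i / u i):
    (hbinom : ∀ i, ∀ m ≤ u i,
      μ {ω | W i ω = m} = ENNReal.ofReal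
        ((u i).choose m * (2 * w i / u i) ^ m * (1 - 2 * w i / u i) ^ (u i - m))) :
    (∫ ω, ∑ i, c i * (W i ω : ℝ) ∂μ) = 2 * ∑ i, c i * w i ∧
    (∫ ω, ∑ i, abar i * (W i ω : ℝ) ∂μ) ≥ 2 ∧
    μ {ω | ∑ i, abar i * (W i ω : ℝ) < 1} ≤ ENNReal.ofReal (8 / 9) := by
  have hu' : ∀ i, (0 : ℝ) < u i := fun i => Nat.cast_pos.2 (hu i)
  have hp : ∀ i, 2 * w i / u i ∈ I := fun i =>
    ⟨div_nonneg (by linarith [hw0 i]) (hu' i).le,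
      div_le_one_of_le₀ (by linarith [hw i]) (hu' i).le⟩
  have hlaw : ∀ i, HasLaw (fun ω => (W i ω : ℝ)) Bin(ℝ, u i, ⟨_, hp i⟩) μ := fun i =>
    (hasLaw_binomial_of_measure_eq (hmeas i) (hle i) (hbinom i)).natCast_binomial
  have hmean : ∀ i, μ[fun ω => (W i ω : ℝ)] = 2 * w i := fun i => by
    rw [integral_of_hasLaw_binomial (hlaw i)]
    field_simp [(hu' i).ne']
  have hL2 : ∀ i, MemLp (fun ω => (W i ω : ℝ)) 2 μ := fun i =>
    MemLp.of_bound (hlaw i).aemeasurable.aestronglyMeasurable (u i)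
      (ae_of_all _ fun ω => by simpa using hle i ω)
  have hlin : ∀ d : Fin n → ℝ, ∫ ω, ∑ i, d i * (W i ω : ℝ) ∂μ = 2 * ∑ i, d i * w i := fun d => by
    rw [integral_finsetSum _ fun i _ => ((hL2 i).integrable one_le_two).const_mul (d i), mul_sum]
    simp_rw [integral_const_mul, hmean]
    exact sum_congr rfl fun i _ => by ring
  refine ⟨hlin c, by rw [hlin abar]; linarith, ?_⟩
  have hvar := variance_sum_mul_le_integral hL2
    (fun i j hij => (hindep.indepFun hij).comp measurable_from_top measurable_from_top)
    (fun i => variance_le_integral_of_hasLaw_binomial (hlaw i)) habar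
  have htail := measureReal_lt_one_le_of_variance_le_integral
    (memLp_finsetSum _ fun i _ => (hL2 i).const_mul (abar i)) hvar (by rw [hlin abar]; linarith)
  rw [← ofReal_measureReal]
  exact ENNReal.ofReal_le_ofReal (htail.trans (by norm_num))

theorem stmt_8 {Ω : Type*} [MeasureSpace Ω] (μ : Measure Ω) [IsProbabilityMeasure μ]
    (n : ℕ) (W : Fin n → Ω → ℕ) (hmeas : ∀ i, Measurable (W i))
    (hindep : iIndepFun W μ)
    (u : Fin n → ℕ) (hu : ∀ i, 0 < u i)
    (w c : Fin n → ℝ) (hw0 : ∀ i, 0 ≤ w i) (hw : ∀ i, w i ≤ (u i : ℝ) / 2)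
    (hc : ∀ i, 0 ≤ c i)
    (abar : Fin n → ℝ) (habar : ∀ i, abar i ∈ Set.Icc (0 : ℝ) 1)
    (hfrac : ∑ i, abar i * w i ≥ 1)
    (hle : ∀ i, ∀ ω, W i ω ≤ u i)
    -- W i is distributed as Binomial(u i, 2 w i / u i):
    (hbinom : ∀ i, ∀ m ≤ u i,
      μ {ω | W i ω = m} = ENNReal.ofReal
        ((u i).choose m * (2 * w i / u i) ^ m * (1 - 2 * w i / u i) ^ (u i - m))) :
    (∫ ω, ∑ i, c i * (W i ω : ℝ) ∂μ) = 2 * ∑ i, c i * w i ∧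
    (∫ ω, ∑ i, abar i * (W i ω : ℝ) ∂μ) ≥ 2 ∧
    μ {ω | ∑ i, abar i * (W i ω : ℝ) < 1} ≤ ENNReal.ofReal (8 / 9) :=
  stmt_8_general μ n W hmeas hindep u hu w c hw0 hw abar habar hfrac hle hbinom
end

section
/- Let x be a fractional point with 0 ≤ x_i ≤ u_i for all i, and define x̄_i = x_i if x_i < τ·u_i and x̄_i = u_i otherwise, where τ ∈ (0, 1/2). Let H = {i : x_i ≥ τ·u_i} and suppose b := 1 − ∑_{i∈H} a_i·u_i > 0, all a_i ≥ 0, and ∑_{i∉H} min{1, a_i/b}·x_i ≥ 1. Then ∑_i a_i·x̄_i ≥ 1. -/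
theorem stmt_16 (n : ℕ) (x u a xbar : Fin n → ℝ) (τ b : ℝ)
    (hτ : τ ∈ Set.Ioo (0 : ℝ) (1 / 2))
    (hx : ∀ i, 0 ≤ x i ∧ x i ≤ u i) (ha : ∀ i, 0 ≤ a i)
    (hxbar : ∀ i, xbar i = if x i < τ * u i then x i else u i)
    (H : Finset (Fin n)) (hH : ∀ i, i ∈ H ↔ τ * u i ≤ x i)
    (hb : b = 1 - ∑ i ∈ H, a i * u i) (hbpos : 0 < b)
    (hKC : ∑ i ∈ Hᶜ, min 1 (a i / b) * x i ≥ 1) :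
    ∑ i, a i * xbar i ≥ 1 := by
  have hsplit : ∑ i, a i * xbar i = ∑ i ∈ H, a i * xbar i + ∑ i ∈ Hᶜ, a i * xbar i := by
    rw [Finset.sum_add_sum_compl]
  have h1 : ∑ i ∈ H, a i * xbar i = ∑ i ∈ H, a i * u i := by
    apply Finset.sum_congr rfl
    intro i hi
    rw [hxbar i, if_neg (not_lt.2 ((hH i).1 hi))]
  have h2 : ∑ i ∈ Hᶜ, a i * xbar i = ∑ i ∈ Hᶜ, a i * x i := by
    apply Finset.sum_congr rfl
    intro i hi
    have : ¬ τ * u i ≤ x i := fun h => (Finset.mem_compl.1 hi) ((hH i).2 h)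
    rw [hxbar i, if_pos (not_le.1 this)]
  have key : ∑ i ∈ Hᶜ, a i * x i ≥ b := by
    have h3 : ∀ i ∈ Hᶜ, min 1 (a i / b) * x i ≤ (a i / b) * x i := by
      intro i _
      exact mul_le_mul_of_nonneg_right (min_le_right _ _) (hx i).1
    have h4 : (1 : ℝ) ≤ ∑ i ∈ Hᶜ, (a i / b) * x i :=
      le_trans hKC (Finset.sum_le_sum h3)
    have : ∑ i ∈ Hᶜ, (a i / b) * x i = (∑ i ∈ Hᶜ, a i * x i) / b := by
      rw [Finset.sum_div]
      exact Finset.sum_congr rfl fun i _ => by ring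
    rw [this, le_div_iff₀ hbpos, one_mul] at h4
    linarith
  rw [hsplit, h1, h2]
  linarith [key]
end

section
/- Let x be an integer point with 0 ≤ x_i ≤ u_i satisfying ∑_{i=1}^n a_i x_i ≥ 1 with all a_i, u_i ≥ 0 and u_i integers. Then for every subset H ⊆ [n] with a(H) := ∑_{i∈H} a_i u_i < 1, we have ∑_{i∉H} min{a_i, 1 − a(H)}·x_i ≥ 1 − a(H). -/
theorem stmt_17 (n : ℕ) (x u : Fin n → ℕ) (a : Fin n → ℝ)
    (ha : ∀ i, 0 ≤ a i) (hx : ∀ i, x i ≤ u i)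
    (hcov : ∑ i, a i * (x i : ℝ) ≥ 1)
    (H : Finset (Fin n)) (hH : ∑ i ∈ H, a i * (u i : ℝ) < 1) :
    ∑ i ∈ Hᶜ, min (a i) (1 - ∑ i ∈ H, a i * (u i : ℝ)) * (x i : ℝ) ≥
      1 - ∑ i ∈ H, a i * (u i : ℝ) := by
  set b : ℝ := 1 - ∑ i ∈ H, a i * (u i : ℝ) with hb
  have hbpos : 0 < b := by simp [hb]; linarith
  by_cases hcase : ∃ i ∈ Hᶜ, b ≤ a i ∧ 1 ≤ x i
  · obtain ⟨i, hi, hai, hxi⟩ := hcase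
    have h1 : (1 : ℝ) ≤ (x i : ℝ) := by exact_mod_cast hxi
    have hterm : b ≤ min (a i) b * (x i : ℝ) := by
      rw [min_eq_right hai]
      nlinarith
    have hsum : min (a i) b * (x i : ℝ) ≤
        ∑ j ∈ Hᶜ, min (a j) b * (x j : ℝ) := by
      apply Finset.single_le_sum (fun j _ => ?_) hi
      exact mul_nonneg (le_min (ha j) hbpos.le) (Nat.cast_nonneg _)
    linarith
  · push_neg at hcase
    have heq : ∀ i ∈ Hᶜ, min (a i) b * (x i : ℝ) = a i * (x i : ℝ) := by
      intro i hi
      rcases le_or_gt b (a i) with h | h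
      · have := hcase i hi h
        interval_cases hxi : x i
        · simp
      · rw [min_eq_left h.le]
    rw [Finset.sum_congr rfl heq]
    have hsplit : ∑ i, a i * (x i : ℝ) =
        ∑ i ∈ H, a i * (x i : ℝ) + ∑ i ∈ Hᶜ, a i * (x i : ℝ) :=
      (Finset.sum_add_sum_compl H _).symm
    have hHle : ∑ i ∈ H, a i * (x i : ℝ) ≤ ∑ i ∈ H, a i * (u i : ℝ) := by
      apply Finset.sum_le_sum
      intro i _
      exact mul_le_mul_of_nonneg_left (by exact_mod_cast hx i) (ha i)
    linarith
end
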